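/- Let w be any nonnegative weighting function on pairs (s_d, s_{d-1}) (with coordinate sums d and d-1) supported only on congruent pairs and satisfying the coupling constraints with respect to the conditional distributions of S given D=d and D=d-1. Then for every coordinate k, E[S_k | D=d] − E[S_k | D=d-1] = ∑ w(s_d, s_{d-1}) · (s_{d,k} − s_{d-1,k}) ≥ 0. -/

import Mathlib

open Finset

/- Probability of an event, conditional probability `P(A|B)`, and conditional
expectation `E[Y|A]` under a mass function `p` on a finite sample space. -/

open Classical in
noncomputable def Pr {Ω : Type*} [Fintype Ω] (p : Ω → ℝ) (A : Ω → Prop) : ℝ :=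
  ∑ ω, if A ω then p ω else 0

noncomputable def cPr {Ω : Type*} [Fintype Ω] (p : Ω → ℝ) (A B : Ω → Prop) : ℝ :=
  Pr p (fun ω => A ω ∧ B ω) / Pr p B

open Classical in
noncomputable def cexp {Ω : Type*} [Fintype Ω] (p : Ω → ℝ) (Y : Ω → ℝ) (A : Ω → Prop) : ℝ :=
  (∑ ω, if A ω then p ω * Y ω else 0) / Pr p A

/-!
Both conditional means are marginal expectations of the coupling `w`, so their difference is the
`w`-expectation of the increment `s k - s' k`. Since `w` lives on congruent pairs `s = s' + e_j`,
that increment is `0` or `1` wherever `w` is nonzero.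
-/

lemma cexp_comp_eq_sum_cPr {Ω α : Type*} [Fintype Ω] [DecidableEq α] (p : Ω → ℝ) (X : Ω → α)
    (f : α → ℝ) (P : α → Prop) [DecidablePred P] :
    cexp p (fun ω => f (X ω)) (fun ω => P (X ω))
      = ∑ a ∈ (univ.image X).filter P, cPr p (fun ω => X ω = a) (fun ω => P (X ω)) * f a := by
  have hfiber (ω : Ω) : ∑ a ∈ (univ.image X).filter P,
      (if X ω = a ∧ P (X ω) then p ω * f a else 0) = if P (X ω) then p ω * f (X ω) else 0 := by
    simp only [and_comm (a := X ω = _), ite_and]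
    split_ifs with h
    · rw [sum_ite_eq, if_pos (by simp [h])]
    · simp
  simp only [cexp, cPr, Pr, div_mul_eq_mul_div, ← sum_div, sum_mul, ite_mul, zero_mul]
  rw [sum_comm]
  exact congrArg (· / _) (sum_congr rfl fun ω _ => (hfiber ω).symm)

lemma sum_mul_sub_sum_mul_eq_of_marginals {α β R : Type*} [CommRing R] {A : Finset α}
    {B : Finset β} {w : α → β → R} {μ : α → R} {ν : β → R}
    (hμ : ∀ a ∈ A, ∑ b ∈ B, w a b = μ a) (hν : ∀ b ∈ B, ∑ a ∈ A, w a b = ν b)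
    (f : α → R) (g : β → R) :
    ∑ a ∈ A, μ a * f a - ∑ b ∈ B, ν b * g b = ∑ a ∈ A, ∑ b ∈ B, w a b * (f a - g b) := by
  calc
    _ = ∑ a ∈ A, ∑ b ∈ B, w a b * f a - ∑ a ∈ A, ∑ b ∈ B, w a b * g b := by
      congr 1
      · exact sum_congr rfl fun a ha => by rw [← hμ a ha, sum_mul]
      · rw [sum_comm]
        exact sum_congr rfl fun b hb => by rw [← hν b hb, sum_mul]
    _ = _ := by simp only [mul_sub, sum_sub_distrib]

def IsCongruentPair {ι : Type*} [DecidableEq ι] (s s' : ι → ℕ) : Prop :=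
  ∃ j, s = s' + Pi.single j 1

lemma IsCongruentPair.le {ι : Type*} [DecidableEq ι] {s s' : ι → ℕ} (h : IsCongruentPair s s') :
    s' ≤ s := by
  obtain ⟨j, rfl⟩ := h
  exact le_self_add

theorem congruent_coupling_implies_nondecreasing_means_general
    {Ω : Type*} [Fintype Ω] (K : ℕ)
    (p : Ω → ℝ)
    (S : Ω → Fin K → ℕ) (D : Ω → ℕ) (hD : ∀ ω, D ω = ∑ i, S ω i)
    (d : ℕ)
    (w : (Fin K → ℕ) → (Fin K → ℕ) → ℝ)
    (hw0 : ∀ s s', 0 ≤ w s s')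
    (hcong : ∀ s s' : Fin K → ℕ, (∑ i, s i = d) → (∑ i, s' i = d - 1) →
      (∀ j : Fin K, s ≠ s' + Pi.single j 1) → w s s' = 0)
    (hw1 : ∀ s' : Fin K → ℕ, (∑ i, s' i = d - 1) →
      ∑ s ∈ (univ.image S).filter (fun s => ∑ i, s i = d), w s s'
        = cPr p (fun ω => S ω = s') (fun ω => D ω = d - 1))
    (hw2 : ∀ s : Fin K → ℕ, (∑ i, s i = d) →
      ∑ s' ∈ (univ.image S).filter (fun s' => ∑ i, s' i = d - 1), w s s'
        = cPr p (fun ω => S ω = s) (fun ω => D ω = d)) :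
    ∀ k : Fin K,
      cexp p (fun ω => (S ω k : ℝ)) (fun ω => D ω = d)
          - cexp p (fun ω => (S ω k : ℝ)) (fun ω => D ω = d - 1)
        = ∑ s ∈ (univ.image S).filter (fun s => ∑ i, s i = d),
            ∑ s' ∈ (univ.image S).filter (fun s' => ∑ i, s' i = d - 1),
              w s s' * ((s k : ℝ) - (s' k : ℝ)) ∧
      0 ≤ ∑ s ∈ (univ.image S).filter (fun s => ∑ i, s i = d),
            ∑ s' ∈ (univ.image S).filter (fun s' => ∑ i, s' i = d - 1),
              w s s' * ((s k : ℝ) - (s' k : ℝ)) := by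
  obtain rfl : D = fun ω => ∑ i, S ω i := funext hD
  intro k
  have hmean := (congrArg₂ (· - ·)
      (cexp_comp_eq_sum_cPr p S (fun s => (s k : ℝ)) (fun s => ∑ i, s i = d))
      (cexp_comp_eq_sum_cPr p S (fun s => (s k : ℝ)) (fun s => ∑ i, s i = d - 1))).trans
    (sum_mul_sub_sum_mul_eq_of_marginals (fun s hs => hw2 s (mem_filter.1 hs).2)
      (fun s' hs' => hw1 s' (mem_filter.1 hs').2) _ _)
  refine ⟨hmean, sum_nonneg fun s hs => sum_nonneg fun s' hs' => ?_⟩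
  by_cases hss' : IsCongruentPair s s'
  · exact mul_nonneg (hw0 s s') (sub_nonneg.2 (Nat.cast_le.2 (hss'.le k)))
  · rw [hcong s s' (mem_filter.1 hs).2 (mem_filter.1 hs').2 (not_exists.1 hss'), zero_mul]

/-- A nonnegative weighting function supported only on congruent pairs and satisfying
the coupling constraints represents the difference of conditional sub-treatment means
as a nonnegative weighted sum: for every coordinate `k`,
`E[S_k|D=d] − E[S_k|D=d-1] = ∑ w(s_d,s_{d-1})·(s_{d,k} − s_{d-1,k}) ≥ 0`. -/
theorem congruent_coupling_implies_nondecreasing_means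
    {Ω : Type*} [Fintype Ω] (K : ℕ)
    (p : Ω → ℝ) (hp0 : ∀ ω, 0 ≤ p ω) (hp1 : ∑ ω, p ω = 1)
    (S : Ω → Fin K → ℕ) (D : Ω → ℕ) (hD : ∀ ω, D ω = ∑ i, S ω i)
    (d : ℕ) (hd : 1 ≤ d)
    (hPd : 0 < Pr p (fun ω => D ω = d)) (hPd1 : 0 < Pr p (fun ω => D ω = d - 1))
    (w : (Fin K → ℕ) → (Fin K → ℕ) → ℝ)
    (hw0 : ∀ s s', 0 ≤ w s s')
    (hcong : ∀ s s' : Fin K → ℕ, (∑ i, s i = d) → (∑ i, s' i = d - 1) →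
      (∀ j : Fin K, s ≠ s' + Pi.single j 1) → w s s' = 0)
    (hw1 : ∀ s' : Fin K → ℕ, (∑ i, s' i = d - 1) →
      ∑ s ∈ (univ.image S).filter (fun s => ∑ i, s i = d), w s s'
        = cPr p (fun ω => S ω = s') (fun ω => D ω = d - 1))
    (hw2 : ∀ s : Fin K → ℕ, (∑ i, s i = d) →
      ∑ s' ∈ (univ.image S).filter (fun s' => ∑ i, s' i = d - 1), w s s'
        = cPr p (fun ω => S ω = s) (fun ω => D ω = d)) :
    ∀ k : Fin K,
      cexp p (fun ω => (S ω k : ℝ)) (fun ω => D ω = d)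
          - cexp p (fun ω => (S ω k : ℝ)) (fun ω => D ω = d - 1)
        = ∑ s ∈ (univ.image S).filter (fun s => ∑ i, s i = d),
            ∑ s' ∈ (univ.image S).filter (fun s' => ∑ i, s' i = d - 1),
              w s s' * ((s k : ℝ) - (s' k : ℝ)) ∧
      0 ≤ ∑ s ∈ (univ.image S).filter (fun s => ∑ i, s i = d),
            ∑ s' ∈ (univ.image S).filter (fun s' => ∑ i, s' i = d - 1),
              w s s' * ((s k : ℝ) - (s' k : ℝ)) :=
  congruent_coupling_implies_nondecreasing_means_general K p S D hD d w hw0 hcong hw1 hw2
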